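/- arXiv:0909.4101 — 2 statements merged into one kernel-verified Lean document; each statement's English description precedes it below -/
import Mathlib

section
/- For every nonzero polynomial system f ∈ H_d, the condition number κ̃(f) equals ‖f‖_W / dist(f, Σ_ℝ), where dist(f, Σ_ℝ) is the distance in the Bombieri–Weyl norm from f to the set Σ_ℝ of ill-posed systems. -/
open MvPolynomial Finset ENNReal

/-- Bombieri–Weyl inner product of two polynomials (intended for homogeneous
polynomials of the same degree `d`): `⟨Σ aⱼ xʲ, Σ bⱼ xʲ⟩_W = Σ aⱼ bⱼ / binom(d, j)`
where `binom(d, j) = d! / (j₀! ⋯ jₙ!)`. -/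
noncomputable def bwInner {m : ℕ} (p q : MvPolynomial (Fin m) ℝ) : ℝ :=
  ∑ j ∈ p.support ∪ q.support,
    (p.coeff j * q.coeff j) / (Nat.multinomial Finset.univ j : ℝ)

/-- Bombieri–Weyl norm of one polynomial. -/
noncomputable def bwNorm {m : ℕ} (p : MvPolynomial (Fin m) ℝ) : ℝ :=
  Real.sqrt (bwInner p p)

/-- Bombieri–Weyl norm `‖f‖_W` of a system `f = (f_1, …, f_n)`. -/
noncomputable def bwNormSys {n : ℕ} (f : Fin n → MvPolynomial (Fin (n + 1)) ℝ) : ℝ :=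
  Real.sqrt (∑ i, bwInner (f i) (f i))

/-- Distance (w.r.t. the Bombieri–Weyl norm) from a system `f` to a set `S` of systems. -/
noncomputable def bwDist {n : ℕ} (f : Fin n → MvPolynomial (Fin (n + 1)) ℝ)
    (S : Set (Fin n → MvPolynomial (Fin (n + 1)) ℝ)) : ℝ :=
  sInf ((fun g => bwNormSys (f - g)) '' S)

/-- The unit sphere `Sⁿ ⊆ ℝ^{n+1}`. -/
def unitSphere (n : ℕ) : Set (Fin (n + 1) → ℝ) := {x | ∑ k, x k ^ 2 = 1}

/-- `f` belongs to `H_d`: each component is homogeneous of degree `d i`. -/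
def IsSystem {n : ℕ} (d : Fin n → ℕ) (f : Fin n → MvPolynomial (Fin (n + 1)) ℝ) : Prop :=
  ∀ i, (f i).IsHomogeneous (d i)

/-- The derivative `Df(x)` restricted to the tangent space `T_x Sⁿ = x^⊥` is singular,
i.e. it kills some nonzero tangent vector `v`. -/
def SingularAt {n : ℕ} (f : Fin n → MvPolynomial (Fin (n + 1)) ℝ)
    (x : Fin (n + 1) → ℝ) : Prop :=
  ∃ v : Fin (n + 1) → ℝ, v ≠ 0 ∧ (∑ k, v k * x k = 0) ∧
    ∀ i, ∑ k, MvPolynomial.eval x (MvPolynomial.pderiv k (f i)) * v k = 0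

/-- `Σ_ℝ(x)`: the systems in `H_d` having `x` as a multiple zero. -/
def SigmaRx {n : ℕ} (d : Fin n → ℕ) (x : Fin (n + 1) → ℝ) :
    Set (Fin n → MvPolynomial (Fin (n + 1)) ℝ) :=
  {g | IsSystem d g ∧ (∀ i, MvPolynomial.eval x (g i) = 0) ∧ SingularAt g x}

/-- `Σ_ℝ = ⋃_{x ∈ Sⁿ} Σ_ℝ(x)`: the systems in `H_d` with a multiple zero on `Sⁿ`. -/
def SigmaR {n : ℕ} (d : Fin n → ℕ) : Set (Fin n → MvPolynomial (Fin (n + 1)) ℝ) :=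
  ⋃ x ∈ unitSphere n, SigmaRx d x

/-- The smallest singular value of `diag(1/√dᵢ) · Df(x)|_{T_x Sⁿ}`, i.e.
`inf {‖diag(1/√dᵢ)·Df(x) v‖₂ : v ⊥ x, ‖v‖₂ = 1}`.  This equals
`‖f‖_W · μ̃_norm(f,x)⁻¹`, where `μ̃_norm(f,x) = ‖f‖_W ‖(Df(x)|_{T_x Sⁿ})⁻¹ diag(√dᵢ)‖`
(spectral norm, `+∞` when `Df(x)|_{T_x Sⁿ}` is singular); it is `0` exactly
when `μ̃_norm(f,x) = +∞`. -/
noncomputable def sigmaMin {n : ℕ} (d : Fin n → ℕ)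
    (f : Fin n → MvPolynomial (Fin (n + 1)) ℝ) (x : Fin (n + 1) → ℝ) : ℝ :=
  sInf ((fun v => Real.sqrt (∑ i,
      ((∑ k, MvPolynomial.eval x (MvPolynomial.pderiv k (f i)) * v k) / Real.sqrt (d i)) ^ 2)) ''
    {v : Fin (n + 1) → ℝ | (∑ k, v k * x k = 0) ∧ ∑ k, v k ^ 2 = 1})

/-- `κ̃(f, x) = ‖f‖_W / (‖f‖_W² μ̃_norm(f,x)⁻² + ‖f(x)‖₂²)^{1/2}` as an extended
nonnegative real (value `+∞` when `f` has `x` as multiple zero), using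
`‖f‖_W² μ̃_norm(f,x)⁻² = (sigmaMin d f x)²`. -/
noncomputable def kappaAt {n : ℕ} (d : Fin n → ℕ)
    (f : Fin n → MvPolynomial (Fin (n + 1)) ℝ) (x : Fin (n + 1) → ℝ) : ℝ≥0∞ :=
  ENNReal.ofReal (bwNormSys f) /
    ENNReal.ofReal (Real.sqrt (sigmaMin d f x ^ 2 + ∑ i, (MvPolynomial.eval x (f i)) ^ 2))

/-- `κ̃(f) = max_{x ∈ Sⁿ} κ̃(f, x)`. -/
noncomputable def kappa {n : ℕ} (d : Fin n → ℕ)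
    (f : Fin n → MvPolynomial (Fin (n + 1)) ℝ) : ℝ≥0∞ :=
  ⨆ x ∈ unitSphere n, kappaAt d f x

/-!
The powers of linear forms are the reproducing kernels of the Bombieri–Weyl inner product:
`⟨p, ⟨x,·⟩ᵈ⟩_W = p(x)` and `d ⟨p, ⟨x,·⟩ᵈ⁻¹⟨v,·⟩⟩_W = Dp(x) v` for `p` homogeneous of degree `d`.
Both follow by induction from Euler's identity once one knows that multiplication by `Xₖ` is
adjoint to `∂ₖ` up to the factor `d`, a multinomial-coefficient identity. For `x` on the sphere and
`v` a unit tangent vector these two kernels are orthogonal, of squared norms `1` and `1/d`.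
Hence, by Bessel's inequality, a system with a multiple zero at `x` along `v` is at squared
distance at least `‖f(x)‖² + Σᵢ (Dfᵢ(x) v)² / dᵢ` from `f`, and subtracting from `f` its
projection onto these kernels attains this bound. Minimising over `v` gives
`dist(f, Σ_ℝ(x))² = σ_min² + ‖f(x)‖²`, i.e. `κ̃(f, x) = ‖f‖_W / dist(f, Σ_ℝ(x))`, and taking the
infimum over `x ∈ Sⁿ` gives the theorem.
-/

theorem Nat.add_one_mul_multinomial {α : Type*} [DecidableEq α] {s : Finset α} {a : α}
    (ha : a ∈ s) (f : α → ℕ) :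
    (∑ i ∈ s, f i + 1) * Nat.multinomial s f
      = (f a + 1) * Nat.multinomial s (Function.update f a (f a + 1)) := by
  have hrest : ∀ i ∈ s.erase a, Function.update f a (f a + 1) i = f i :=
    fun i hi => Function.update_of_ne (ne_of_mem_erase hi) _ _
  rw [← insert_erase ha, Nat.multinomial_insert (notMem_erase a s),
    Nat.multinomial_insert (notMem_erase a s), sum_insert (notMem_erase a s),
    Nat.multinomial_congr hrest, sum_congr rfl hrest, Function.update_self, ← mul_assoc,
    Nat.add_one_mul_choose_eq, add_right_comm]
  ring

section BombieriWeyl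

variable {m : ℕ}

lemma bwInner_eq_sum_of_support_subset {p q : MvPolynomial (Fin m) ℝ} {u : Finset (Fin m →₀ ℕ)}
    (hq : q.support ⊆ u) :
    bwInner p q = ∑ j ∈ u, p.coeff j * q.coeff j / (Nat.multinomial univ j : ℝ) := by
  have hzero : ∀ j, j ∉ q.support → p.coeff j * q.coeff j / (Nat.multinomial univ j : ℝ) = 0 :=
    fun j hj => by rw [notMem_support_iff.mp hj, mul_zero, zero_div]
  rw [bwInner, ← sum_subset subset_union_right fun j _ => hzero j,
    sum_subset hq fun j _ => hzero j]

lemma bwInner_comm (p q : MvPolynomial (Fin m) ℝ) : bwInner p q = bwInner q p := by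
  simp only [bwInner, union_comm, mul_comm]

lemma bwInner_add_left (p q r : MvPolynomial (Fin m) ℝ) :
    bwInner (p + q) r = bwInner p r + bwInner q r := by
  simp only [bwInner_comm _ r,
    bwInner_eq_sum_of_support_subset (support_add.trans subset_union_left :
      (p + q).support ⊆ p.support ∪ q.support ∪ r.support),
    bwInner_eq_sum_of_support_subset (subset_union_left.trans subset_union_left :
      p.support ⊆ p.support ∪ q.support ∪ r.support),
    bwInner_eq_sum_of_support_subset (subset_union_right.trans subset_union_left :
      q.support ⊆ p.support ∪ q.support ∪ r.support),
    ← sum_add_distrib, coeff_add, mul_add, add_div]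

lemma bwInner_smul_left (c : ℝ) (p q : MvPolynomial (Fin m) ℝ) :
    bwInner (c • p) q = c * bwInner p q := by
  rw [bwInner_comm, bwInner_comm p, bwInner_eq_sum_of_support_subset support_smul,
    bwInner_eq_sum_of_support_subset subset_rfl, mul_sum]
  refine sum_congr rfl fun j _ => ?_
  rw [coeff_smul, smul_eq_mul]
  ring

lemma bwInner_add_right (p q r : MvPolynomial (Fin m) ℝ) :
    bwInner p (q + r) = bwInner p q + bwInner p r := by
  simp only [bwInner_comm p, bwInner_add_left]

lemma bwInner_smul_right (c : ℝ) (p q : MvPolynomial (Fin m) ℝ) :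
    bwInner p (c • q) = c * bwInner p q := by
  rw [bwInner_comm, bwInner_smul_left, bwInner_comm]

lemma bwInner_sub_left (p q r : MvPolynomial (Fin m) ℝ) :
    bwInner (p - q) r = bwInner p r - bwInner q r := by
  rw [sub_eq_add_neg, ← neg_one_smul ℝ q, bwInner_add_left, bwInner_smul_left]
  ring

lemma bwInner_sub_right (p q r : MvPolynomial (Fin m) ℝ) :
    bwInner p (q - r) = bwInner p q - bwInner p r := by
  simp only [bwInner_comm p, bwInner_sub_left]

lemma bwInner_sum_right {ι : Type*} (s : Finset ι) (p : MvPolynomial (Fin m) ℝ)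
    (q : ι → MvPolynomial (Fin m) ℝ) :
    bwInner p (∑ i ∈ s, q i) = ∑ i ∈ s, bwInner p (q i) :=
  map_sum (AddMonoidHom.mk' (bwInner p) (bwInner_add_right p)) q s

lemma bwInner_self_nonneg (p : MvPolynomial (Fin m) ℝ) : 0 ≤ bwInner p p :=
  sum_nonneg fun _ _ => div_nonneg (mul_self_nonneg _) (Nat.cast_nonneg _)

lemma sq_bwInner_add_sq_bwInner_div_le {h p q : MvPolynomial (Fin m) ℝ}
    (hpp : bwInner p p = 1) (hpq : bwInner p q = 0) (hqq : 0 < bwInner q q) :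
    bwInner h p ^ 2 + bwInner h q ^ 2 / bwInner q q ≤ bwInner h h := by
  have key := bwInner_self_nonneg (h - bwInner h p • p - (bwInner h q / bwInner q q) • q)
  simp only [bwInner_sub_left, bwInner_sub_right, bwInner_smul_left, bwInner_smul_right,
    hpp, hpq, bwInner_comm q p, bwInner_comm p h, bwInner_comm q h] at key
  field_simp at key ⊢
  nlinarith [key]

lemma bwInner_smul_add_smul_self {p q : MvPolynomial (Fin m) ℝ}
    (hpp : bwInner p p = 1) (hpq : bwInner p q = 0) (a b : ℝ) :
    bwInner (a • p + b • q) (a • p + b • q) = a ^ 2 + b ^ 2 * bwInner q q := by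
  simp only [bwInner_add_left, bwInner_add_right, bwInner_smul_left, bwInner_smul_right, hpp,
    hpq, bwInner_comm q p]
  ring

end BombieriWeyl

section Reproducing

variable {m : ℕ}

theorem bwInner_X_mul {e : ℕ} {q : MvPolynomial (Fin m) ℝ} (hq : q.IsHomogeneous e)
    (p : MvPolynomial (Fin m) ℝ) (k : Fin m) :
    (e + 1 : ℝ) * bwInner p (X k * q) = bwInner (pderiv k p) q := by
  classical
  rw [bwInner_eq_sum_of_support_subset (support_X_mul k q).subset, sum_map,
    bwInner_eq_sum_of_support_subset subset_rfl, mul_sum]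
  refine sum_congr rfl fun j hj => ?_
  have hdeg : ∑ i, j i = e := by
    simpa [Finsupp.weight_apply, Finsupp.sum_fintype] using hq (mem_support_iff.mp hj)
  have hshift : ⇑(Finsupp.single k 1 + j : Fin m →₀ ℕ) = Function.update (⇑j) k (j k + 1) := by
    ext i
    rcases eq_or_ne i k with rfl | hi <;> simp [*, add_comm]
  have hmult := Nat.add_one_mul_multinomial (mem_univ k) ⇑j
  rw [hdeg, ← hshift] at hmult
  have hmultR : ((e : ℝ) + 1) * Nat.multinomial univ ⇑j
      = (j k + 1) * Nat.multinomial univ ⇑(Finsupp.single k 1 + j : Fin m →₀ ℕ) := by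
    exact_mod_cast hmult
  have hne : ∀ j' : Fin m →₀ ℕ, (Nat.multinomial univ ⇑j' : ℝ) ≠ 0 :=
    fun j' => Nat.cast_ne_zero.mpr (Nat.multinomial_pos _ _).ne'
  rw [addLeftEmbedding_apply, coeff_X_mul, coeff_pderiv, add_comm j, ← mul_div_assoc,
    div_eq_div_iff (hne _) (hne _)]
  linear_combination (p.coeff (Finsupp.single k 1 + j) * q.coeff j) * hmultR

noncomputable def linForm (y : Fin m → ℝ) : MvPolynomial (Fin m) ℝ :=
  ∑ k, C (y k) * X k

lemma eval_linForm (y z : Fin m → ℝ) : eval z (linForm y) = ∑ k, y k * z k := by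
  simp [linForm]

lemma isHomogeneous_linForm_pow (y : Fin m → ℝ) (d : ℕ) : (linForm y ^ d).IsHomogeneous d := by
  have h : (linForm y).IsHomogeneous 1 :=
    IsHomogeneous.sum univ _ 1 fun k _ => (isHomogeneous_X ℝ k).C_mul (y k)
  simpa using h.pow d

lemma mul_linForm (q : MvPolynomial (Fin m) ℝ) (y : Fin m → ℝ) :
    q * linForm y = ∑ k, y k • (X k * q) := by
  simp only [linForm, mul_sum, smul_eq_C_mul]
  exact sum_congr rfl fun k _ => by ring

lemma bwInner_mul_linForm {e : ℕ} {q : MvPolynomial (Fin m) ℝ} (hq : q.IsHomogeneous e)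
    (p : MvPolynomial (Fin m) ℝ) (y : Fin m → ℝ) :
    (e + 1 : ℝ) * bwInner p (q * linForm y) = ∑ k, y k * bwInner (pderiv k p) q := by
  simp only [mul_linForm, bwInner_sum_right, bwInner_smul_right, mul_sum, mul_left_comm _ (y _),
    bwInner_X_mul hq]

theorem bwInner_linForm_pow {d : ℕ} {p : MvPolynomial (Fin m) ℝ} (hp : p.IsHomogeneous d)
    (y : Fin m → ℝ) : bwInner p (linForm y ^ d) = eval y p := by
  induction d generalizing p with
  | zero =>
    rw [← totalDegree_zero_iff_isHomogeneous, totalDegree_eq_zero_iff_eq_C] at hp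
    rw [hp, pow_zero, eval_C, bwInner_eq_sum_of_support_subset support_one.subset]
    simp [Nat.multinomial]
  | succ e ih =>
    -- Euler's identity `∑ Xₖ ∂ₖp = (e + 1) p` closes the induction.
    have euler := congrArg (eval y) hp.sum_X_mul_pderiv
    simp only [map_sum, map_mul, eval_X, nsmul_eq_mul, Nat.cast_succ, map_add, map_natCast,
      map_one] at euler
    have h := bwInner_mul_linForm (isHomogeneous_linForm_pow y e) p y
    simp only [fun k => ih (p := pderiv k p) (by simpa using hp.pderiv)] at h
    rw [pow_succ]
    have he : (e + 1 : ℝ) ≠ 0 := by positivity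
    exact mul_left_cancel₀ he (h.trans euler)

noncomputable def dirDeriv (p : MvPolynomial (Fin m) ℝ) (x v : Fin m → ℝ) : ℝ :=
  ∑ k, eval x (pderiv k p) * v k

theorem bwInner_linForm_pow_mul_linForm {e : ℕ} {p : MvPolynomial (Fin m) ℝ}
    (hp : p.IsHomogeneous (e + 1)) (x v : Fin m → ℝ) :
    (e + 1 : ℝ) * bwInner p (linForm x ^ e * linForm v) = dirDeriv p x v := by
  rw [bwInner_mul_linForm (isHomogeneous_linForm_pow x e), dirDeriv]
  exact sum_congr rfl fun k _ => by
    rw [bwInner_linForm_pow (by simpa using hp.pderiv), mul_comm]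

end Reproducing

section Jet

variable {m : ℕ}

lemma dirDeriv_add (p q : MvPolynomial (Fin m) ℝ) (x v : Fin m → ℝ) :
    dirDeriv (p + q) x v = dirDeriv p x v + dirDeriv q x v := by
  simp only [dirDeriv, map_add, add_mul, sum_add_distrib]

lemma dirDeriv_sub (p q : MvPolynomial (Fin m) ℝ) (x v : Fin m → ℝ) :
    dirDeriv (p - q) x v = dirDeriv p x v - dirDeriv q x v := by
  simp only [dirDeriv, map_sub, sub_mul, sum_sub_distrib]

lemma dirDeriv_smul (c : ℝ) (p : MvPolynomial (Fin m) ℝ) (x v : Fin m → ℝ) :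
    dirDeriv (c • p) x v = c * dirDeriv p x v := by
  simp [dirDeriv, mul_sum, mul_assoc]

lemma dirDeriv_mul (p q : MvPolynomial (Fin m) ℝ) (x v : Fin m → ℝ) :
    dirDeriv (p * q) x v = dirDeriv p x v * eval x q + eval x p * dirDeriv q x v := by
  simp only [dirDeriv, Derivation.leibniz, smul_eq_mul, map_add, map_mul, add_mul,
    sum_add_distrib, sum_mul, mul_sum]
  rw [add_comm]
  congr 1 <;> exact sum_congr rfl fun k _ => by ring

lemma pderiv_linForm (y : Fin m → ℝ) (k : Fin m) : pderiv k (linForm y) = C (y k) := by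
  simp [linForm, pderiv_X, Pi.single_apply]

lemma dirDeriv_linForm (y x v : Fin m → ℝ) : dirDeriv (linForm y) x v = ∑ k, y k * v k := by
  simp [dirDeriv, pderiv_linForm]

variable {x v : Fin m → ℝ}

lemma eval_linForm_self (hx : ∑ k, x k ^ 2 = 1) : eval x (linForm x) = 1 := by
  simpa [eval_linForm, sq] using hx

lemma bwInner_linForm_pow_self (hx : ∑ k, x k ^ 2 = 1) (d : ℕ) :
    bwInner (linForm x ^ d) (linForm x ^ d) = 1 := by
  rw [bwInner_linForm_pow (isHomogeneous_linForm_pow x d), map_pow, eval_linForm_self hx, one_pow]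

lemma isHomogeneous_linForm_pow_mul_linForm (x v : Fin m → ℝ) (e : ℕ) :
    (linForm x ^ e * linForm v).IsHomogeneous (e + 1) := by
  simpa using (isHomogeneous_linForm_pow x e).mul (isHomogeneous_linForm_pow v 1)

lemma bwInner_linForm_pow_linForm_pow_mul_linForm (hx : ∑ k, x k ^ 2 = 1)
    (hxv : ∑ k, v k * x k = 0) (e : ℕ) :
    bwInner (linForm x ^ (e + 1)) (linForm x ^ e * linForm v) = 0 := by
  rw [bwInner_comm, bwInner_linForm_pow (isHomogeneous_linForm_pow_mul_linForm x v e), map_mul,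
    map_pow, eval_linForm_self hx, eval_linForm, hxv, mul_zero]

lemma dirDeriv_linForm_pow (hx : ∑ k, x k ^ 2 = 1) (hxv : ∑ k, v k * x k = 0) (d : ℕ) :
    dirDeriv (linForm x ^ d) x v = 0 := by
  simp [dirDeriv, pderiv_linForm, eval_linForm_self hx, mul_assoc, ← mul_sum,
    mul_comm (x _), hxv]

lemma dirDeriv_linForm_pow_mul_linForm (hx : ∑ k, x k ^ 2 = 1) (hv : ∑ k, v k ^ 2 = 1)
    (hxv : ∑ k, v k * x k = 0) (e : ℕ) :
    dirDeriv (linForm x ^ e * linForm v) x v = 1 := by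
  rw [dirDeriv_mul, dirDeriv_linForm_pow hx hxv, dirDeriv_linForm, map_pow, eval_linForm_self hx]
  simpa [sq] using hv

lemma bwInner_self_linForm_pow_mul_linForm (hx : ∑ k, x k ^ 2 = 1) (hv : ∑ k, v k ^ 2 = 1)
    (hxv : ∑ k, v k * x k = 0) (e : ℕ) :
    bwInner (linForm x ^ e * linForm v) (linForm x ^ e * linForm v) = 1 / (e + 1) := by
  have h := bwInner_linForm_pow_mul_linForm (isHomogeneous_linForm_pow_mul_linForm x v e) x v
  rw [dirDeriv_linForm_pow_mul_linForm hx hv hxv] at h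
  rw [_root_.eq_div_iff (by positivity), mul_comm, h]

/-- Bessel's inequality for the orthogonal pair `⟨x,·⟩ᵈ`, `⟨x,·⟩ᵈ⁻¹⟨v,·⟩`. -/
theorem sq_eval_add_sq_dirDeriv_div_le_bwInner {d : ℕ} (hd : 1 ≤ d)
    {h : MvPolynomial (Fin m) ℝ} (hh : h.IsHomogeneous d) (hx : ∑ k, x k ^ 2 = 1)
    (hv : ∑ k, v k ^ 2 = 1) (hxv : ∑ k, v k * x k = 0) :
    eval x h ^ 2 + dirDeriv h x v ^ 2 / d ≤ bwInner h h := by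
  obtain ⟨e, rfl⟩ := Nat.exists_eq_add_of_le' hd
  have hQ := bwInner_self_linForm_pow_mul_linForm hx hv hxv e
  have hbessel := sq_bwInner_add_sq_bwInner_div_le (h := h) (bwInner_linForm_pow_self hx (e + 1))
    (bwInner_linForm_pow_linForm_pow_mul_linForm hx hxv e) (by rw [hQ]; positivity)
  rw [bwInner_linForm_pow hh, hQ] at hbessel
  rw [← bwInner_linForm_pow_mul_linForm hh]
  convert hbessel using 2
  push_cast
  field_simp

noncomputable def jetPoly (x v : Fin m → ℝ) (d : ℕ) (a b : ℝ) : MvPolynomial (Fin m) ℝ :=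
  a • linForm x ^ d + b • (linForm x ^ (d - 1) * linForm v)

lemma isHomogeneous_jetPoly {d : ℕ} (hd : 1 ≤ d) (x v : Fin m → ℝ) (a b : ℝ) :
    (jetPoly x v d a b).IsHomogeneous d := by
  obtain ⟨e, rfl⟩ := Nat.exists_eq_add_of_le' hd
  rw [jetPoly, smul_eq_C_mul, smul_eq_C_mul, Nat.add_sub_cancel]
  exact ((isHomogeneous_linForm_pow x _).C_mul a).add
    ((isHomogeneous_linForm_pow_mul_linForm x v e).C_mul b)

lemma eval_jetPoly (hx : ∑ k, x k ^ 2 = 1) (hxv : ∑ k, v k * x k = 0) (d : ℕ) (a b : ℝ) :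
    eval x (jetPoly x v d a b) = a := by
  simp [jetPoly, eval_linForm_self hx, eval_linForm, hxv]

lemma dirDeriv_jetPoly (hx : ∑ k, x k ^ 2 = 1) (hv : ∑ k, v k ^ 2 = 1)
    (hxv : ∑ k, v k * x k = 0) (d : ℕ) (a b : ℝ) :
    dirDeriv (jetPoly x v d a b) x v = b := by
  rw [jetPoly, dirDeriv_add, dirDeriv_smul, dirDeriv_smul, dirDeriv_linForm_pow hx hxv,
    dirDeriv_linForm_pow_mul_linForm hx hv hxv, mul_zero, mul_one, zero_add]

lemma bwInner_jetPoly_self {d : ℕ} (hd : 1 ≤ d) (hx : ∑ k, x k ^ 2 = 1)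
    (hv : ∑ k, v k ^ 2 = 1) (hxv : ∑ k, v k * x k = 0) (a b : ℝ) :
    bwInner (jetPoly x v d a b) (jetPoly x v d a b) = a ^ 2 + b ^ 2 / d := by
  obtain ⟨e, rfl⟩ := Nat.exists_eq_add_of_le' hd
  rw [jetPoly, Nat.add_sub_cancel, bwInner_smul_add_smul_self (bwInner_linForm_pow_self hx _)
    (bwInner_linForm_pow_linForm_pow_mul_linForm hx hxv e),
    bwInner_self_linForm_pow_mul_linForm hx hv hxv]
  push_cast
  ring

end Jet

section Tangents

variable {m : ℕ}

def unitTangents (x : Fin m → ℝ) : Set (Fin m → ℝ) :=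
  {v | (∑ k, v k * x k = 0) ∧ ∑ k, v k ^ 2 = 1}

lemma sum_sq_inv_sqrt_smul {w : Fin m → ℝ} (hw : w ≠ 0) :
    ∑ k, ((√(∑ j, w j ^ 2))⁻¹ • w) k ^ 2 = 1 := by
  have hpos : 0 < ∑ j, w j ^ 2 := by
    obtain ⟨k, hk⟩ := Function.ne_iff.mp hw
    exact sum_pos' (fun j _ => sq_nonneg _) ⟨k, mem_univ k, sq_pos_of_ne_zero hk⟩
  simp only [Pi.smul_apply, smul_eq_mul, mul_pow, ← mul_sum, inv_pow,
    Real.sq_sqrt hpos.le, inv_mul_cancel₀ hpos.ne']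

lemma dirDeriv_smul_right (p : MvPolynomial (Fin m) ℝ) (x : Fin m → ℝ) (c : ℝ)
    (v : Fin m → ℝ) : dirDeriv p x (c • v) = c * dirDeriv p x v := by
  simp only [dirDeriv, Pi.smul_apply, smul_eq_mul, mul_sum]
  exact sum_congr rfl fun k _ => by ring

lemma smul_mem_unitTangents {w x : Fin m → ℝ} (hw : w ≠ 0) (hwx : ∑ k, w k * x k = 0) :
    (√(∑ j, w j ^ 2))⁻¹ • w ∈ unitTangents x := by
  refine ⟨?_, sum_sq_inv_sqrt_smul hw⟩
  simp only [Pi.smul_apply, smul_eq_mul, mul_assoc, ← mul_sum, hwx, mul_zero]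

lemma unitTangents_nonempty {n : ℕ} (hn : 1 ≤ n) (x : Fin (n + 1) → ℝ) :
    (unitTangents x).Nonempty := by
  have hker : LinearMap.ker (Fintype.linearCombination ℝ x) ≠ ⊥ :=
    LinearMap.ker_ne_bot_of_finrank_lt (by simp; omega)
  obtain ⟨w, hw, hw0⟩ := (Submodule.ne_bot_iff _).mp hker
  exact ⟨_, smul_mem_unitTangents hw0 (by simpa [Fintype.linearCombination_apply] using hw)⟩

lemma SingularAt.exists_mem_unitTangents {n : ℕ} {g : Fin n → MvPolynomial (Fin (n + 1)) ℝ}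
    {x : Fin (n + 1) → ℝ} (hg : SingularAt g x) :
    ∃ u ∈ unitTangents x, ∀ i, dirDeriv (g i) x u = 0 := by
  obtain ⟨w, hw0, hwx, hwg⟩ := hg
  exact ⟨_, smul_mem_unitTangents hw0 hwx, fun i => by
    rw [dirDeriv_smul_right, dirDeriv, hwg i, mul_zero]⟩

end Tangents

section DistanceAtPoint

variable {n : ℕ} {d : Fin n → ℕ} {f : Fin n → MvPolynomial (Fin (n + 1)) ℝ}
  {x : Fin (n + 1) → ℝ}

noncomputable def normalizedDerivSq (d : Fin n → ℕ) (f : Fin n → MvPolynomial (Fin (n + 1)) ℝ)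
    (x v : Fin (n + 1) → ℝ) : ℝ :=
  ∑ i, dirDeriv (f i) x v ^ 2 / d i

lemma normalizedDerivSq_nonneg (d : Fin n → ℕ) (f : Fin n → MvPolynomial (Fin (n + 1)) ℝ)
    (x v : Fin (n + 1) → ℝ) : 0 ≤ normalizedDerivSq d f x v :=
  sum_nonneg fun _ _ => by positivity

lemma sigmaMin_eq_sInf (d : Fin n → ℕ) (f : Fin n → MvPolynomial (Fin (n + 1)) ℝ)
    (x : Fin (n + 1) → ℝ) :
    sigmaMin d f x = sInf ((fun v => √(normalizedDerivSq d f x v)) '' unitTangents x) := by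
  simp only [sigmaMin, normalizedDerivSq, div_pow, Real.sq_sqrt (Nat.cast_nonneg _)]
  rfl

lemma sq_sigmaMin_le {v : Fin (n + 1) → ℝ} (hv : v ∈ unitTangents x) :
    sigmaMin d f x ^ 2 ≤ normalizedDerivSq d f x v := by
  have hle : sigmaMin d f x ≤ √(normalizedDerivSq d f x v) := by
    rw [sigmaMin_eq_sInf]
    exact csInf_le ⟨0, by rintro _ ⟨w, -, rfl⟩; positivity⟩ ⟨v, hv, rfl⟩
  have h0 : 0 ≤ sigmaMin d f x :=
    Real.sInf_nonneg (by rintro _ ⟨w, -, rfl⟩; positivity)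
  calc sigmaMin d f x ^ 2 ≤ √(normalizedDerivSq d f x v) ^ 2 := by gcongr
    _ = normalizedDerivSq d f x v := Real.sq_sqrt (normalizedDerivSq_nonneg d f x v)

lemma sqrt_sq_sigmaMin_add_le_bwNormSys_sub (hd : ∀ i, 1 ≤ d i) (hf : IsSystem d f)
    (hx : x ∈ unitSphere n) {g : Fin n → MvPolynomial (Fin (n + 1)) ℝ} (hg : g ∈ SigmaRx d x) :
    √(sigmaMin d f x ^ 2 + ∑ i, eval x (f i) ^ 2) ≤ bwNormSys (f - g) := by
  obtain ⟨hgsys, hgx, hgsing⟩ := hg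
  obtain ⟨u, hu, hgu⟩ := hgsing.exists_mem_unitTangents
  refine Real.sqrt_le_sqrt ?_
  have hcomp : ∀ i, eval x (f i) ^ 2 + dirDeriv (f i) x u ^ 2 / d i
      ≤ bwInner ((f - g) i) ((f - g) i) := fun i => by
    simpa [hgx i, hgu i, dirDeriv_sub] using
      sq_eval_add_sq_dirDeriv_div_le_bwInner (hd i) ((hf i).sub (hgsys i)) hx hu.2 hu.1
  calc sigmaMin d f x ^ 2 + ∑ i, eval x (f i) ^ 2
      ≤ ∑ i, eval x (f i) ^ 2 + normalizedDerivSq d f x u := by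
        linarith [sq_sigmaMin_le (d := d) (f := f) hu]
    _ ≤ ∑ i, bwInner ((f - g) i) ((f - g) i) := by
        rw [normalizedDerivSq, ← sum_add_distrib]
        exact sum_le_sum fun i _ => hcomp i

/-- Subtracting from `f` its jet at `x` along `v` leaves a system with a multiple zero at `x`. -/
lemma exists_mem_sigmaRx_bwNormSys_sub_eq (hd : ∀ i, 1 ≤ d i) (hf : IsSystem d f)
    (hx : x ∈ unitSphere n) {v : Fin (n + 1) → ℝ} (hv : v ∈ unitTangents x) :
    ∃ g ∈ SigmaRx d x,
      bwNormSys (f - g) = √(∑ i, eval x (f i) ^ 2 + normalizedDerivSq d f x v) := by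
  set jet : Fin n → MvPolynomial (Fin (n + 1)) ℝ :=
    fun i => jetPoly x v (d i) (eval x (f i)) (dirDeriv (f i) x v)
  refine ⟨f - jet, ⟨fun i => (hf i).sub (isHomogeneous_jetPoly (hd i) _ _ _ _), fun i => ?_,
    v, fun hv0 => ?_, hv.1, fun i => ?_⟩, ?_⟩
  · simp [jet, eval_jetPoly hx hv.1]
  · simpa [hv0] using hv.2
  · change dirDeriv (f i - jet i) x v = 0
    rw [dirDeriv_sub, dirDeriv_jetPoly hx hv.2 hv.1, sub_self]
  · simp only [_root_.sub_sub_cancel, bwNormSys, jet, bwInner_jetPoly_self (hd _) hx hv.2 hv.1,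
      sum_add_distrib, normalizedDerivSq]

lemma sigmaRx_nonempty (hn : 1 ≤ n) (hd : ∀ i, 1 ≤ d i) (hf : IsSystem d f)
    (hx : x ∈ unitSphere n) : (SigmaRx d x).Nonempty :=
  have ⟨_, hv⟩ := unitTangents_nonempty hn x
  have ⟨g, hg, _⟩ := exists_mem_sigmaRx_bwNormSys_sub_eq hd hf hx hv
  ⟨g, hg⟩

theorem bwDist_sigmaRx (hn : 1 ≤ n) (hd : ∀ i, 1 ≤ d i) (hf : IsSystem d f)
    (hx : x ∈ unitSphere n) :
    bwDist f (SigmaRx d x) = √(sigmaMin d f x ^ 2 + ∑ i, eval x (f i) ^ 2) := by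
  set A := ∑ i, eval x (f i) ^ 2
  set φ : ℝ → ℝ := fun t => √(t ^ 2 + A)
  set values := (fun v => √(normalizedDerivSq d f x v)) '' unitTangents x
  have hvalues : values.Nonempty := (unitTangents_nonempty hn x).image _
  have hφ : φ (sigmaMin d f x) = sInf (φ '' values) := by
    rw [sigmaMin_eq_sInf]
    refine MonotoneOn.map_csInf_of_continuousWithinAt (by fun_prop) ?_ hvalues
      ⟨0, by rintro _ ⟨w, -, rfl⟩; positivity⟩
    rintro _ ⟨w, -, rfl⟩ _ ⟨w', -, rfl⟩ hle
    dsimp only [φ]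
    gcongr
  change sInf _ = φ (sigmaMin d f x)
  obtain ⟨g₀, hg₀⟩ := sigmaRx_nonempty hn hd hf hx
  refine le_antisymm ?_ (le_csInf ⟨_, g₀, hg₀, rfl⟩ ?_)
  · rw [hφ]
    refine csInf_le_csInf ⟨0, by rintro _ ⟨g, -, rfl⟩; exact Real.sqrt_nonneg _⟩
      (hvalues.image φ) ?_
    rintro _ ⟨_, ⟨v, hv, rfl⟩, rfl⟩
    obtain ⟨g, hg, hgv⟩ := exists_mem_sigmaRx_bwNormSys_sub_eq hd hf hx hv
    refine ⟨g, hg, ?_⟩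
    simp only [φ, hgv, Real.sq_sqrt (normalizedDerivSq_nonneg d f x v), A, add_comm]
  · rintro _ ⟨g, hg, rfl⟩
    exact sqrt_sq_sigmaMin_add_le_bwNormSys_sub hd hf hx hg

end DistanceAtPoint

lemma ofReal_bwDist {n : ℕ} (f : Fin n → MvPolynomial (Fin (n + 1)) ℝ)
    {S : Set (Fin n → MvPolynomial (Fin (n + 1)) ℝ)} (hS : S.Nonempty) :
    ENNReal.ofReal (bwDist f S) = ⨅ g ∈ S, ENNReal.ofReal (bwNormSys (f - g)) := by
  have : Nonempty S := hS.to_subtype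
  rw [bwDist, sInf_image', ENNReal.ofReal_iInf, iInf_subtype']

lemma unitSphere_nonempty (n : ℕ) : (unitSphere n).Nonempty :=
  ⟨Pi.single 0 1, by simp [unitSphere, Pi.single_apply]⟩

theorem kappa_eq_normW_div_dist_sigmaR_general {n : ℕ} (hn : 1 ≤ n) (d : Fin n → ℕ)
    (hd : ∀ i, 1 ≤ d i) (f : Fin n → MvPolynomial (Fin (n + 1)) ℝ)
    (hf : IsSystem d f) :
    kappa d f = ENNReal.ofReal (bwNormSys f) / ENNReal.ofReal (bwDist f (SigmaR d)) := by
  have hne : ∀ x ∈ unitSphere n, (SigmaRx d x).Nonempty := fun x hx =>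
    sigmaRx_nonempty hn hd hf hx
  have hdist : ENNReal.ofReal (bwDist f (SigmaR d))
      = ⨅ x ∈ unitSphere n, ENNReal.ofReal (bwDist f (SigmaRx d x)) := by
    obtain ⟨x₀, hx₀⟩ := unitSphere_nonempty n
    rw [SigmaR, ofReal_bwDist f (Set.nonempty_biUnion.mpr ⟨x₀, hx₀, hne x₀ hx₀⟩)]
    simp only [iInf_iUnion]
    exact iInf_congr fun x => iInf_congr fun hx => (ofReal_bwDist f (hne x hx)).symm
  simp only [hdist, kappa, kappaAt, div_eq_mul_inv, ENNReal.inv_iInf, ENNReal.mul_iSup]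
  exact iSup_congr fun x => iSup_congr fun hx => by rw [bwDist_sigmaRx hn hd hf hx]

/-- **Condition Number Theorem.** For every nonzero `f ∈ H_d`,
`κ̃(f) = ‖f‖_W / dist(f, Σ_ℝ)`. -/
theorem kappa_eq_normW_div_dist_sigmaR {n : ℕ} (hn : 1 ≤ n) (d : Fin n → ℕ)
    (hd : ∀ i, 1 ≤ d i) (f : Fin n → MvPolynomial (Fin (n + 1)) ℝ)
    (hf : IsSystem d f) (hf0 : f ≠ 0) :
    kappa d f = ENNReal.ofReal (bwNormSys f) / ENNReal.ofReal (bwDist f (SigmaR d)) :=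
  kappa_eq_normW_div_dist_sigmaR_general hn d hd f hf
end

section
/- The Bombieri–Weyl inner product is invariant under the orthogonal group: for every ψ ∈ O(n+1) and all homogeneous polynomials f, g ∈ ℝ[x_0,…,x_n] of degree d, one has ⟨f∘ψ, g∘ψ⟩_W = ⟨f, g⟩_W. -/
open MvPolynomial Finset

/-- The substitution action of a matrix `ψ` on polynomials: `(f ∘ ψ)(x) = f(ψ x)`,
obtained by substituting `xₖ ↦ Σₗ ψₖₗ xₗ`. -/
noncomputable def substMat {m : ℕ} (ψ : Matrix (Fin m) (Fin m) ℝ)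
    (p : MvPolynomial (Fin m) ℝ) : MvPolynomial (Fin m) ℝ :=
  MvPolynomial.aeval (fun k => ∑ l, MvPolynomial.C (ψ k l) * MvPolynomial.X l) p

/-!
On forms of degree `d`, `d! ⟨f, g⟩_W` is the apolar pairing `⟨f, g⟩ = Σⱼ aⱼ bⱼ j!`, for which
multiplication by `xᵢ` is adjoint to `∂ᵢ`; with Euler's identity this gives
`Σᵢ ⟨∂ᵢ f, ∂ᵢ g⟩ = d ⟨f, g⟩`. By the chain rule the gradient of `f ∘ ψ` is `ψᵀ ((∇f) ∘ ψ)`, and an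
orthogonal `ψ` drops out of the sum over `i`, so invariance in degree `d` follows from invariance
in degree `d - 1`.
-/

open scoped Nat Matrix

lemma Finsupp.prod_factorial_add_single {σ : Type*} [Fintype σ] (s : σ →₀ ℕ) (i : σ) :
    ∏ k, ((s + Finsupp.single i 1 : σ →₀ ℕ) k)! = (s i + 1) * ∏ k, (s k)! := by
  classical
  have h (k : σ) :
      ((s + Finsupp.single i 1 : σ →₀ ℕ) k)! = (if k = i then s i + 1 else 1) * (s k)! := by
    by_cases hk : k = i
    · subst hk; simp [Nat.factorial_succ]
    · simp [Finsupp.single_eq_of_ne hk, hk]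
  simp only [h, prod_mul_distrib, Fintype.prod_ite_eq']

namespace MvPolynomial

variable {σ τ R : Type*} [CommSemiring R]

lemma pderiv_aeval [Fintype σ] (g : σ → MvPolynomial τ R) (l : τ) (p : MvPolynomial σ R) :
    pderiv l (aeval g p) = ∑ k, pderiv l (g k) * aeval g (pderiv k p) := by
  classical
  induction p using MvPolynomial.induction_on with
  | C a => simp
  | add p q hp hq => simp only [map_add, hp, hq, mul_add, sum_add_distrib]
  | mul_X p i hp =>
    calc pderiv l (aeval g (p * X i))
        = (∑ k, pderiv l (g k) * aeval g (pderiv k p)) * g i + aeval g p * pderiv l (g i) := by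
          rw [map_mul, aeval_X, pderiv_mul, hp]
      _ = ∑ k, pderiv l (g k) * aeval g (pderiv k (p * X i)) := by
          simp only [pderiv_mul, pderiv_X, Pi.single_apply, map_add, map_mul, aeval_X,
            apply_ite (aeval g), map_zero, mul_ite, mul_one, mul_zero, mul_add, sum_add_distrib,
            sum_ite_eq, mem_univ, if_true, sum_mul, mul_assoc]
          ring

lemma sum_support_coeff_mul_eq_of_subset {p : MvPolynomial σ R} {s : Finset (σ →₀ ℕ)}
    (hs : p.support ⊆ s) (c : (σ →₀ ℕ) → R) :
    ∑ j ∈ p.support, p.coeff j * c j = ∑ j ∈ s, p.coeff j * c j :=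
  Finset.sum_subset hs fun j _ hj => by rw [notMem_support_iff.1 hj, zero_mul]

variable [Fintype σ]

noncomputable def apolarPairing : MvPolynomial σ R →ₗ[R] MvPolynomial σ R →ₗ[R] R :=
  LinearMap.mk₂ R
    (fun p q => ∑ j ∈ p.support, p.coeff j * (q.coeff j * (∏ i, (j i)! : ℕ)))
    (fun p p' q => by
      classical
      rw [sum_support_coeff_mul_eq_of_subset (s := p.support ∪ p'.support) support_add,
        sum_support_coeff_mul_eq_of_subset (p := p) (subset_union_left (s₂ := p'.support)),
        sum_support_coeff_mul_eq_of_subset (p := p') (subset_union_right (s₁ := p.support))]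
      simp only [coeff_add, add_mul, sum_add_distrib])
    (fun c p q => by
      rw [sum_support_coeff_mul_eq_of_subset support_smul, smul_eq_mul, mul_sum]
      simp only [coeff_smul, smul_eq_mul, mul_assoc])
    (fun p q q' => by simp only [coeff_add, mul_add, add_mul, sum_add_distrib])
    (fun c p q => by
      simp only [coeff_smul, smul_eq_mul, mul_sum]
      exact sum_congr rfl fun j _ => by ring)

lemma apolarPairing_apply (p q : MvPolynomial σ R) :
    apolarPairing p q = ∑ j ∈ p.support, p.coeff j * (q.coeff j * (∏ i, (j i)! : ℕ)) :=
  rfl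

lemma apolarPairing_X_mul (i : σ) (p q : MvPolynomial σ R) :
    apolarPairing (X i * p) q = apolarPairing p (pderiv i q) := by
  rw [apolarPairing_apply, apolarPairing_apply, support_X_mul, sum_map]
  refine sum_congr rfl fun s _ => ?_
  rw [addLeftEmbedding_apply, coeff_X_mul, coeff_pderiv, add_comm,
    Finsupp.prod_factorial_add_single]
  push_cast
  ring

lemma sum_apolarPairing_pderiv {n : ℕ} {f : MvPolynomial σ R} (hf : f.IsHomogeneous n)
    (g : MvPolynomial σ R) :
    ∑ i, apolarPairing (pderiv i f) (pderiv i g) = n * apolarPairing f g := by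
  calc ∑ i, apolarPairing (pderiv i f) (pderiv i g)
      = apolarPairing (∑ i, X i * pderiv i f) g := by
        simp only [map_sum, LinearMap.sum_apply, apolarPairing_X_mul]
    _ = n * apolarPairing f g := by
        rw [hf.sum_X_mul_pderiv, map_nsmul, LinearMap.smul_apply, nsmul_eq_mul]

lemma apolarPairing_C (a : R) (q : MvPolynomial σ R) :
    apolarPairing (C a) q = a * q.coeff 0 := by
  rw [apolarPairing_apply, C_apply, sum_support_coeff_mul_eq_of_subset support_monomial_subset,
    sum_singleton]
  simp

end MvPolynomial

lemma Matrix.sum_bilin_sum_smul_of_mul_transpose_eq_one {ι R M N P : Type*} [Fintype ι]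
    [DecidableEq ι] [CommSemiring R] [AddCommMonoid M] [AddCommMonoid N] [AddCommMonoid P]
    [Module R M] [Module R N] [Module R P] (B : M →ₗ[R] N →ₗ[R] P) {ψ : Matrix ι ι R}
    (hψ : ψ * ψᵀ = 1) (u : ι → M) (v : ι → N) :
    ∑ l, B (∑ k, ψ k l • u k) (∑ k, ψ k l • v k) = ∑ k, B (u k) (v k) := by
  have h : ∀ k k', ∑ l, ψ k l * ψ k' l = if k = k' then 1 else 0 := fun k k' => by
    simpa [Matrix.mul_apply, Matrix.one_apply] using congrFun (congrFun hψ k) k'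
  calc ∑ l, B (∑ k, ψ k l • u k) (∑ k, ψ k l • v k)
      = ∑ k', ∑ k, (∑ l, ψ k' l * ψ k l) • B (u k) (v k') := by
        simp only [map_sum, map_smul, LinearMap.sum_apply, LinearMap.smul_apply, smul_sum,
          smul_smul, sum_smul]
        rw [sum_comm]
        exact sum_congr rfl fun k' _ => sum_comm
    _ = ∑ k, B (u k) (v k) := by
        simp only [h, ite_smul, one_smul, zero_smul, sum_ite_eq, mem_univ, if_true]

section Orthogonal

variable {m : ℕ}

lemma substMat_C (ψ : Matrix (Fin m) (Fin m) ℝ) (a : ℝ) : substMat ψ (C a) = C a :=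
  aeval_C _ a

lemma coeff_zero_substMat (ψ : Matrix (Fin m) (Fin m) ℝ) (p : MvPolynomial (Fin m) ℝ) :
    (substMat ψ p).coeff 0 = p.coeff 0 := by
  induction p using MvPolynomial.induction_on <;> simp_all [substMat, ← constantCoeff_eq]

lemma substMat_isHomogeneous (ψ : Matrix (Fin m) (Fin m) ℝ) {d : ℕ}
    {p : MvPolynomial (Fin m) ℝ} (hp : p.IsHomogeneous d) : (substMat ψ p).IsHomogeneous d := by
  have h := hp.aeval (fun k => ∑ l, C (ψ k l) * X l) fun k =>
    IsHomogeneous.sum _ _ _ fun l _ => isHomogeneous_C_mul_X (ψ k l) l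
  rwa [one_mul] at h

lemma pderiv_substMat (ψ : Matrix (Fin m) (Fin m) ℝ) (l : Fin m) (p : MvPolynomial (Fin m) ℝ) :
    pderiv l (substMat ψ p) = ∑ k, ψ k l • substMat ψ (pderiv k p) := by
  rw [substMat, pderiv_aeval]
  refine sum_congr rfl fun k _ => ?_
  simp [pderiv_X, Pi.single_apply, C_mul', substMat]

theorem apolarPairing_substMat_orthogonal {ψ : Matrix (Fin m) (Fin m) ℝ}
    (hψ : ψ ∈ Matrix.orthogonalGroup (Fin m) ℝ) {d : ℕ} {f : MvPolynomial (Fin m) ℝ}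
    (hf : f.IsHomogeneous d) (g : MvPolynomial (Fin m) ℝ) :
    apolarPairing (substMat ψ f) (substMat ψ g) = apolarPairing f g := by
  induction d generalizing f g with
  | zero =>
    obtain ⟨a, rfl⟩ : ∃ a, f = C a :=
      ⟨_, totalDegree_eq_zero_iff_eq_C.1 ((totalDegree_zero_iff_isHomogeneous _).2 hf)⟩
    rw [substMat_C, apolarPairing_C, apolarPairing_C, coeff_zero_substMat]
  | succ d ih =>
    refine mul_left_cancel₀ (Nat.cast_ne_zero.2 d.succ_ne_zero : ((d + 1 : ℕ) : ℝ) ≠ 0) ?_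
    calc ((d + 1 : ℕ) : ℝ) * apolarPairing (substMat ψ f) (substMat ψ g)
        = ∑ l, apolarPairing (pderiv l (substMat ψ f)) (pderiv l (substMat ψ g)) :=
          (sum_apolarPairing_pderiv (substMat_isHomogeneous ψ hf) _).symm
      _ = ∑ k, apolarPairing (substMat ψ (pderiv k f)) (substMat ψ (pderiv k g)) := by
          simp only [pderiv_substMat]
          exact Matrix.sum_bilin_sum_smul_of_mul_transpose_eq_one _
            ((Matrix.mem_orthogonalGroup_iff _ _).1 hψ) _ _
      _ = ∑ k, apolarPairing (pderiv k f) (pderiv k g) :=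
          sum_congr rfl fun k _ => ih (by simpa using hf.pderiv) _
      _ = ((d + 1 : ℕ) : ℝ) * apolarPairing f g := sum_apolarPairing_pderiv hf g

lemma bwInner_eq_apolarPairing_div {d : ℕ} {f : MvPolynomial (Fin m) ℝ}
    (hf : f.IsHomogeneous d) (g : MvPolynomial (Fin m) ℝ) :
    bwInner f g = apolarPairing f g / d ! := by
  rw [bwInner, apolarPairing_apply, sum_div,
    ← sum_subset subset_union_left fun j _ hj => by simp [notMem_support_iff.1 hj]]
  refine sum_congr rfl fun j hj => ?_
  have hdeg : ∑ i, j i = d := by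
    rw [← Finsupp.degree_eq_sum, Finsupp.degree_eq_weight_one]
    exact hf (mem_support_iff.1 hj)
  rw [← hdeg, ← Nat.multinomial_spec]
  push_cast
  field_simp

end Orthogonal

theorem bwInner_substMat_orthogonal_general {n : ℕ} (d : ℕ)
    (ψ : Matrix (Fin (n + 1)) (Fin (n + 1)) ℝ)
    (hψ : ψ ∈ Matrix.orthogonalGroup (Fin (n + 1)) ℝ)
    (f g : MvPolynomial (Fin (n + 1)) ℝ)
    (hf : f.IsHomogeneous d) :
    bwInner (substMat ψ f) (substMat ψ g) = bwInner f g := by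
  rw [bwInner_eq_apolarPairing_div (substMat_isHomogeneous ψ hf), bwInner_eq_apolarPairing_div hf,
    apolarPairing_substMat_orthogonal hψ hf]

/-- The Bombieri–Weyl inner product is invariant under the orthogonal group
`O(n+1)`: for `ψ ∈ O(n+1)` and homogeneous `f, g` of degree `d` in `x₀, …, xₙ`,
`⟨f ∘ ψ, g ∘ ψ⟩_W = ⟨f, g⟩_W`. -/
theorem bwInner_substMat_orthogonal {n : ℕ} (d : ℕ)
    (ψ : Matrix (Fin (n + 1)) (Fin (n + 1)) ℝ)
    (hψ : ψ ∈ Matrix.orthogonalGroup (Fin (n + 1)) ℝ)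
    (f g : MvPolynomial (Fin (n + 1)) ℝ)
    (hf : f.IsHomogeneous d) (hg : g.IsHomogeneous d) :
    bwInner (substMat ψ f) (substMat ψ g) = bwInner f g :=
  bwInner_substMat_orthogonal_general d ψ hψ f g hf
end
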